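/- Define recursively on [a,b]: X̃⁽ⁿ⁾ ≡ 0 for n < 0, X̃⁽⁰⁾ ≡ 1, X̃⁽ⁿ⁾(x) = ∫_{x₀}^x u₀²(y) Σ_{k=1}^N X̃⁽ⁿ⁻²ᵏ⁺¹⁾(y) r_k(y) dy for n odd, and X̃⁽ⁿ⁾(x) = ∫_{x₀}^x X̃⁽ⁿ⁻¹⁾(y) / (u₀²(y) p(y)) dy for n even. If the absolute values of u₀² r_k (k=1,…,N) and 1/(u₀² p) are bounded by m on [a,b], then for all n ≥ 0 and x ∈ [a,b], |X̃^{(2n)}(x)| ≤ Σ_{k=0}^{n-⌊n/N⌋} C(n,k) (m|x-x₀|)^{2(n-k)} / (2(n-k))!. -/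

import Mathlib

/-!
Write `t = m |x - x₀|`. By induction, `‖X̃⁽²ⁿ⁾‖` is bounded by `∑ⱼ c(n, j) t^{2j} / (2j)!`,
where `c(n, j) = C(n, j)` for `j ≥ ⌊n/N⌋` and `0` otherwise. Integrating against a factor
bounded by `m` turns `t^e / e!` into `t^{e+1} / (e+1)!`, so one odd and one even step take the
bounds for `X̃⁽²⁽ⁿ⁻ᵏ⁾⁾`, `0 ≤ k < N`, to a bound for `X̃⁽²⁽ⁿ⁺¹⁾⁾` with coefficients
`∑ₖ c(n - k, j) ≤ ∑_{l ≤ n} C(l, j) = C(n + 1, j + 1)` (hockey stick). These vanish unless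
`⌊(n - k)/N⌋ ≤ j` for some `k < N`, which forces `⌊(n + 1)/N⌋ ≤ j + 1`. Reindexing by
`j = n - k` gives the stated sum.
-/

open MeasureTheory intervalIntegral Finset
open scoped Nat

lemma sum_range_choose_eq_succ_choose_succ (n j : ℕ) :
    ∑ l ∈ range (n + 1), l.choose j = (n + 1).choose (j + 1) := by
  induction n with
  | zero => cases j <;> simp [Nat.choose_succ_succ]
  | succ n ih => rw [sum_range_succ, ih, Nat.choose_succ_succ' (n + 1), add_comm]

def truncChoose (N n j : ℕ) : ℕ := if n / N ≤ j then n.choose j else 0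

lemma truncChoose_of_le {N n j : ℕ} (h : n / N ≤ j) : truncChoose N n j = n.choose j :=
  if_pos h

lemma truncChoose_of_lt {N n j : ℕ} (h : j < n / N) : truncChoose N n j = 0 :=
  if_neg (not_le.2 h)

lemma truncChoose_le_choose (N n j : ℕ) : truncChoose N n j ≤ n.choose j := by
  unfold truncChoose
  split_ifs <;> simp

lemma truncChoose_eq_zero_of_lt {N n j : ℕ} (h : n < j) : truncChoose N n j = 0 :=
  Nat.eq_zero_of_le_zero <| (truncChoose_le_choose N n j).trans_eq (Nat.choose_eq_zero_of_lt h)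

def oddCoeff (N n j : ℕ) : ℕ := ∑ k ∈ range (min N (n + 1)), truncChoose N (n - k) j

lemma oddCoeff_le_truncChoose (N n j : ℕ) : oddCoeff N n j ≤ truncChoose N (n + 1) (j + 1) := by
  by_cases h : (n + 1) / N ≤ j + 1
  · rw [truncChoose_of_le h, ← sum_range_choose_eq_succ_choose_succ,
      ← sum_range_reflect (·.choose j)]
    calc oddCoeff N n j ≤ ∑ k ∈ range (min N (n + 1)), (n - k).choose j :=
          sum_le_sum fun k _ => truncChoose_le_choose N _ j
      _ ≤ ∑ k ∈ range (n + 1), (n - k).choose j :=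
          sum_le_sum_of_subset (range_subset_range.2 (min_le_right _ _))
      _ = ∑ k ∈ range (n + 1), (n + 1 - 1 - k).choose j := by simp
  · have hzero : ∀ k ∈ range (min N (n + 1)), truncChoose N (n - k) j = 0 := by
      intro k hk
      have hkN : k < N := (lt_min_iff.1 (mem_range.1 hk)).1
      have : (n + 1) / N ≤ (n - k) / N + 1 :=
        calc (n + 1) / N ≤ (n - k + N) / N := Nat.div_le_div_right (by omega)
          _ = (n - k) / N + 1 := Nat.add_div_right _ (by omega)
      exact truncChoose_of_lt (by omega)
    simp [oddCoeff, sum_eq_zero hzero]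

noncomputable def evenMajorant (N n : ℕ) (t : ℝ) : ℝ :=
  ∑ j ∈ range (n + 1), (truncChoose N n j : ℝ) * (t ^ (2 * j) / (2 * j)!)

noncomputable def oddMajorant (N n : ℕ) (t : ℝ) : ℝ :=
  ∑ j ∈ range (n + 1), (oddCoeff N n j : ℝ) * (t ^ (2 * j + 1) / (2 * j + 1)!)

lemma evenMajorant_eq_sum_range {N n M : ℕ} (h : n < M) (t : ℝ) :
    evenMajorant N n t = ∑ j ∈ range M, (truncChoose N n j : ℝ) * (t ^ (2 * j) / (2 * j)!) :=
  sum_subset (range_subset_range.2 h) fun j _ hj => by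
    rw [truncChoose_eq_zero_of_lt (by simp only [mem_range] at hj; omega)]
    simp

lemma evenMajorant_eq_sum_choose (N n : ℕ) (t : ℝ) :
    evenMajorant N n t = ∑ k ∈ range (n - n / N + 1),
      (n.choose k : ℝ) * t ^ (2 * (n - k)) / (2 * (n - k))! := by
  obtain ⟨q, hq⟩ : ∃ q, n / N = q := ⟨_, rfl⟩
  have hqn : q ≤ n := hq ▸ Nat.div_le_self n N
  rw [evenMajorant, ← sum_range_reflect, hq]
  refine (sum_subset (range_subset_range.2 (show n - q + 1 ≤ n + 1 by omega))
    fun k hk hk' => ?_).symm.trans (sum_congr rfl fun k hk => ?_)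
  · simp only [mem_range] at hk hk'
    rw [show n + 1 - 1 - k = n - k by omega, truncChoose_of_lt (by rw [hq]; omega)]
    simp
  · simp only [mem_range] at hk
    rw [show n + 1 - 1 - k = n - k by omega, truncChoose_of_le (by rw [hq]; omega),
      Nat.choose_symm (by omega), mul_div_assoc]

lemma oddMajorant_nonneg (N n : ℕ) {t : ℝ} (ht : 0 ≤ t) : 0 ≤ oddMajorant N n t := by
  unfold oddMajorant
  positivity

lemma abs_integral_mul_pow_abs_sub_div_factorial {m : ℝ} (hm : 0 ≤ m) (e : ℕ) (x₀ x : ℝ) :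
    |∫ y in x₀..x, m * ((m * |y - x₀|) ^ e / e !)| = (m * |x - x₀|) ^ (e + 1) / (e + 1)! := by
  have hintegrand : (fun y => m * ((m * |y - x₀|) ^ e / e !)) =
      fun y => m ^ (e + 1) / e ! * |y - x₀| ^ e := by
    funext y
    rw [mul_pow]
    ring
  rw [hintegrand, intervalIntegral.integral_const_mul, abs_mul, abs_intervalIntegral_eq,
    integral_pow_abs_sub_uIoc, abs_of_nonneg (by positivity), abs_of_nonneg (by positivity),
    Nat.factorial_succ]
  push_cast
  field_simp
  ring

lemma norm_integral_le_sum_pow_div_factorial {E : Type*} [NormedAddCommGroup E] [NormedSpace ℝ E]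
    {F : ℝ → E} {x₀ x m : ℝ} (hm : 0 ≤ m) (M : Finset ℕ) (c : ℕ → ℝ) (hc : ∀ i, 0 ≤ c i)
    (e : ℕ → ℕ) (hF : ∀ y ∈ Set.uIoc x₀ x,
      ‖F y‖ ≤ ∑ i ∈ M, c i * (m * ((m * |y - x₀|) ^ e i / (e i)!))) :
    ‖∫ y in x₀..x, F y‖ ≤ ∑ i ∈ M, c i * ((m * |x - x₀|) ^ (e i + 1) / (e i + 1)!) := by
  have hint : ∀ i ∈ M, IntervalIntegrable
      (fun y => c i * (m * ((m * |y - x₀|) ^ e i / (e i)!))) volume x₀ x :=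
    fun i _ => Continuous.intervalIntegrable (by fun_prop) _ _
  refine (norm_integral_le_abs_of_norm_le ((ae_restrict_iff' measurableSet_uIoc).2
    (Filter.Eventually.of_forall hF)) (Continuous.intervalIntegrable (by fun_prop) _ _)).trans ?_
  rw [integral_finsetSum hint]
  refine (abs_sum_le_sum_abs _ _).trans_eq (sum_congr rfl fun i _ => ?_)
  rw [intervalIntegral.integral_const_mul, abs_mul, abs_of_nonneg (hc i),
    abs_integral_mul_pow_abs_sub_div_factorial hm]

section Recursion

variable {s : Set ℝ} {x₀ m : ℝ} {N : ℕ} {p u₀ : ℝ → ℂ} {r : ℕ → ℝ → ℂ} {Xt : ℤ → ℝ → ℂ}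

lemma sum_Icc_eq_sum_range_even_index (hneg : ∀ n : ℤ, n < 0 → ∀ x, Xt n x = 0) (n : ℕ) (y : ℝ) :
    ∑ k ∈ Icc 1 N, Xt (2 * (n : ℤ) + 1 - 2 * k + 1) y * r k y =
      ∑ k ∈ range (min N (n + 1)), Xt (2 * (n - k : ℕ)) y * r (k + 1) y := by
  have hshift : ∀ f : ℕ → ℂ, ∑ k ∈ Icc 1 N, f k = ∑ k ∈ range N, f (k + 1) := fun f => by
    rw [range_eq_Ico, sum_Ico_add' f 0 N 1]
    rfl
  rw [hshift]
  refine (sum_subset (range_subset_range.2 (min_le_left _ _)) fun k hk hk' => ?_).symm.trans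
    (sum_congr rfl fun k hk => ?_)
  · simp only [mem_range, lt_min_iff, not_and, not_lt] at hk hk'
    rw [hneg _ (by push_cast; omega), zero_mul]
  · simp only [mem_range, lt_min_iff] at hk
    congr 2
    push_cast [show k ≤ n by omega]
    ring

lemma norm_odd_le_oddMajorant (hs : s.OrdConnected) (hx₀ : x₀ ∈ s) (hm : 0 ≤ m)
    (hneg : ∀ n : ℤ, n < 0 → ∀ x, Xt n x = 0)
    (hodd : ∀ n : ℤ, 0 < n → Odd n → ∀ x,
      Xt n x = ∫ y in x₀..x, u₀ y ^ 2 * ∑ k ∈ Icc 1 N, Xt (n - 2 * (k : ℤ) + 1) y * r k y)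
    (hbound1 : ∀ k ∈ Icc 1 N, ∀ x ∈ s, ‖u₀ x ^ 2 * r k x‖ ≤ m) (n : ℕ)
    (ih : ∀ j ≤ n, ∀ y ∈ s, ‖Xt (2 * j) y‖ ≤ evenMajorant N j (m * |y - x₀|)) :
    ∀ x ∈ s, ‖Xt (2 * n + 1) x‖ ≤ oddMajorant N n (m * |x - x₀|) := by
  intro x hx
  rw [hodd _ (by positivity) (odd_two_mul_add_one _) x]
  refine norm_integral_le_sum_pow_div_factorial hm _ _ (fun _ => by positivity) _ fun y hy => ?_
  have hys : y ∈ s := hs.uIoc_subset hx₀ hx hy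
  rw [sum_Icc_eq_sum_range_even_index hneg, mul_sum]
  calc ‖∑ k ∈ range (min N (n + 1)), u₀ y ^ 2 * (Xt (2 * (n - k : ℕ)) y * r (k + 1) y)‖
      ≤ ∑ k ∈ range (min N (n + 1)), m * evenMajorant N (n - k) (m * |y - x₀|) := by
        refine (norm_sum_le _ _).trans (sum_le_sum fun k hk => ?_)
        have hkN : k < N := (lt_min_iff.1 (mem_range.1 hk)).1
        rw [mul_left_comm, norm_mul, mul_comm]
        exact mul_le_mul (hbound1 (k + 1) (mem_Icc.2 ⟨by omega, by omega⟩) y hys)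
          (ih (n - k) (by omega) y hys) (norm_nonneg _) hm
    _ = ∑ k ∈ range (min N (n + 1)), m * ∑ j ∈ range (n + 1),
          (truncChoose N (n - k) j : ℝ) * ((m * |y - x₀|) ^ (2 * j) / (2 * j)!) :=
        sum_congr rfl fun k _ => by rw [evenMajorant_eq_sum_range (M := n + 1) (by omega)]
    _ = ∑ j ∈ range (n + 1),
          (oddCoeff N n j : ℝ) * (m * ((m * |y - x₀|) ^ (2 * j) / (2 * j)!)) := by
        simp_rw [mul_sum, oddCoeff, Nat.cast_sum, sum_mul]
        rw [sum_comm]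
        exact sum_congr rfl fun j _ => sum_congr rfl fun k _ => by ring

lemma norm_even_succ_le_evenMajorant (hs : s.OrdConnected) (hx₀ : x₀ ∈ s) (hm : 0 ≤ m)
    (heven : ∀ n : ℤ, 0 < n → Even n → ∀ x,
      Xt n x = ∫ y in x₀..x, Xt (n - 1) y / (u₀ y ^ 2 * p y))
    (hbound2 : ∀ x ∈ s, ‖1 / (u₀ x ^ 2 * p x)‖ ≤ m) (n : ℕ)
    (hodd_le : ∀ y ∈ s, ‖Xt (2 * n + 1) y‖ ≤ oddMajorant N n (m * |y - x₀|)) :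
    ∀ x ∈ s, ‖Xt (2 * (n + 1 : ℕ)) x‖ ≤ evenMajorant N (n + 1) (m * |x - x₀|) := by
  intro x hx
  rw [heven _ (by positivity) ⟨n + 1, by push_cast; ring⟩ x]
  calc _ ≤ ∑ j ∈ range (n + 1),
          (oddCoeff N n j : ℝ) * ((m * |x - x₀|) ^ (2 * j + 1 + 1) / (2 * j + 1 + 1)!) := by
        refine norm_integral_le_sum_pow_div_factorial hm _ _ (fun _ => by positivity) _
          fun y hy => ?_
        have hys : y ∈ s := hs.uIoc_subset hx₀ hx hy
        rw [show 2 * ((n + 1 : ℕ) : ℤ) - 1 = 2 * n + 1 by push_cast; ring, div_eq_mul_one_div,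
          norm_mul]
        calc _ ≤ oddMajorant N n (m * |y - x₀|) * m :=
              mul_le_mul (hodd_le y hys) (hbound2 y hys) (norm_nonneg _)
                (oddMajorant_nonneg N n (by positivity))
          _ = _ := by
              rw [oddMajorant, sum_mul]
              exact sum_congr rfl fun j _ => by ring
    _ ≤ ∑ j ∈ range (n + 1),
          (truncChoose N (n + 1) (j + 1) : ℝ) *
            ((m * |x - x₀|) ^ (2 * (j + 1)) / (2 * (j + 1))!) := by
        refine sum_le_sum fun j _ => ?_
        rw [show 2 * j + 1 + 1 = 2 * (j + 1) by ring]
        gcongr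
        exact_mod_cast oddCoeff_le_truncChoose N n j
    _ ≤ evenMajorant N (n + 1) (m * |x - x₀|) := by
        rw [evenMajorant, sum_range_succ' _ (n + 1)]
        exact le_add_of_nonneg_right (by positivity)

lemma norm_even_le_evenMajorant (hs : s.OrdConnected) (hx₀ : x₀ ∈ s) (hm : 0 ≤ m)
    (hneg : ∀ n : ℤ, n < 0 → ∀ x, Xt n x = 0)
    (hzero : ∀ x, Xt 0 x = 1)
    (hodd : ∀ n : ℤ, 0 < n → Odd n → ∀ x,
      Xt n x = ∫ y in x₀..x, u₀ y ^ 2 * ∑ k ∈ Icc 1 N, Xt (n - 2 * (k : ℤ) + 1) y * r k y)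
    (heven : ∀ n : ℤ, 0 < n → Even n → ∀ x,
      Xt n x = ∫ y in x₀..x, Xt (n - 1) y / (u₀ y ^ 2 * p y))
    (hbound1 : ∀ k ∈ Icc 1 N, ∀ x ∈ s, ‖u₀ x ^ 2 * r k x‖ ≤ m)
    (hbound2 : ∀ x ∈ s, ‖1 / (u₀ x ^ 2 * p x)‖ ≤ m) (n : ℕ) :
    ∀ x ∈ s, ‖Xt (2 * n) x‖ ≤ evenMajorant N n (m * |x - x₀|) := by
  induction n using Nat.strong_induction_on with
  | _ n ih =>
    cases n with
    | zero => simp [hzero, evenMajorant, truncChoose]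
    | succ n =>
      exact norm_even_succ_le_evenMajorant hs hx₀ hm heven hbound2 n
        (norm_odd_le_oddMajorant hs hx₀ hm hneg hodd hbound1 n fun j hj => ih j (by omega))

end Recursion

theorem stmt4_general (a b x₀ : ℝ) (hx₀ : x₀ ∈ Set.Icc a b)
    (N : ℕ) (p u₀ : ℝ → ℂ) (r : ℕ → ℝ → ℂ) (m : ℝ)
    (Xt : ℤ → ℝ → ℂ)
    (hneg : ∀ n : ℤ, n < 0 → ∀ x, Xt n x = 0)
    (hzero : ∀ x, Xt 0 x = 1)
    (hodd : ∀ n : ℤ, 0 < n → Odd n → ∀ x,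
      Xt n x = ∫ y in x₀..x, u₀ y ^ 2 * ∑ k ∈ Finset.Icc 1 N, Xt (n - 2 * (k : ℤ) + 1) y * r k y)
    (heven : ∀ n : ℤ, 0 < n → Even n → ∀ x,
      Xt n x = ∫ y in x₀..x, Xt (n - 1) y / (u₀ y ^ 2 * p y))
    (hbound1 : ∀ k ∈ Finset.Icc 1 N, ∀ x ∈ Set.Icc a b, ‖u₀ x ^ 2 * r k x‖ ≤ m)
    (hbound2 : ∀ x ∈ Set.Icc a b, ‖1 / (u₀ x ^ 2 * p x)‖ ≤ m) :
    ∀ n : ℕ, ∀ x ∈ Set.Icc a b,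
      ‖Xt (2 * n) x‖ ≤ ∑ k ∈ Finset.range (n - n / N + 1),
        (n.choose k : ℝ) * (m * |x - x₀|) ^ (2 * (n - k)) / (Nat.factorial (2 * (n - k)) : ℝ) := by
  intro n x hx
  have hm : 0 ≤ m := (norm_nonneg _).trans (hbound2 x₀ hx₀)
  rw [← evenMajorant_eq_sum_choose]
  exact norm_even_le_evenMajorant Set.ordConnected_Icc hx₀ hm hneg hzero hodd heven hbound1
    hbound2 n x hx

theorem stmt4 (a b x₀ : ℝ) (hab : a ≤ b) (hx₀ : x₀ ∈ Set.Icc a b)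
    (N : ℕ) (hN : 1 ≤ N) (p u₀ : ℝ → ℂ) (r : ℕ → ℝ → ℂ) (m : ℝ)
    (Xt : ℤ → ℝ → ℂ)
    (hneg : ∀ n : ℤ, n < 0 → ∀ x, Xt n x = 0)
    (hzero : ∀ x, Xt 0 x = 1)
    (hodd : ∀ n : ℤ, 0 < n → Odd n → ∀ x,
      Xt n x = ∫ y in x₀..x, u₀ y ^ 2 * ∑ k ∈ Finset.Icc 1 N, Xt (n - 2 * (k : ℤ) + 1) y * r k y)
    (heven : ∀ n : ℤ, 0 < n → Even n → ∀ x,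
      Xt n x = ∫ y in x₀..x, Xt (n - 1) y / (u₀ y ^ 2 * p y))
    (hbound1 : ∀ k ∈ Finset.Icc 1 N, ∀ x ∈ Set.Icc a b, ‖u₀ x ^ 2 * r k x‖ ≤ m)
    (hbound2 : ∀ x ∈ Set.Icc a b, ‖1 / (u₀ x ^ 2 * p x)‖ ≤ m) :
    ∀ n : ℕ, ∀ x ∈ Set.Icc a b,
      ‖Xt (2 * n) x‖ ≤ ∑ k ∈ Finset.range (n - n / N + 1),
        (n.choose k : ℝ) * (m * |x - x₀|) ^ (2 * (n - k)) / (Nat.factorial (2 * (n - k)) : ℝ) :=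
  stmt4_general a b x₀ hx₀ N p u₀ r m Xt hneg hzero hodd heven hbound1 hbound2
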